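/- Let α, μ ≥ 0 and β > 0 with α − β(μ+1) < 0, and set s̃ := 2(μ+1 − α/β) > 0. For every complex s with 0 < Re(s) < s̃, the Mellin transform of S^!_{α,β,μ} satisfies ∫_0^∞ S^!_{α,β,μ}(r)·r^{s−1} dr = Γ(μ+1−s/2)·Γ(s/2) / (2·Γ(μ+1)) · η(β(s̃−s)/2), where η(z) := Σ_{n=0}^∞ (n!)^{−z} for Re(z) > 0. -/

import Mathlib

/-!
Substituting `x = r² / (a + r²)` turns `∫₀^∞ r^(s-1) (a + r²)^(-ν) dr` into the Beta integral
`a^(s/2 - ν) B(s/2, ν - s/2) / 2`. Applied to `a = (n!)^β` with weight `(n!)^α`, the `n`-th term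
of the series contributes `(n!)^(α + β(s/2 - ν)) = (n!)^(-β(s̃ - s)/2)` times that Beta factor.
Termwise integration is legitimate because the integrals of the absolute values are the same
expressions at `Re s`, and `∑ (n!)^(-c)` converges for `c > 0` by the ratio test.
-/

open Filter Complex MeasureTheory Set
open scoped Nat

lemma ofReal_cpow_eq_exp {x : ℝ} (hx : 0 < x) (w : ℂ) : (x : ℂ) ^ w = exp (w * Real.log x) := by
  rw [cpow_def_of_ne_zero (ofReal_ne_zero.mpr hx.ne'), ofReal_log hx.le, mul_comm]

lemma ofReal_eq_exp {x : ℝ} (hx : 0 < x) : (x : ℂ) = exp (Real.log x) := by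
  rw [← ofReal_exp, Real.exp_log hx]

lemma ofReal_rpow_mul_ofReal_rpow_cpow {x : ℝ} (hx : 0 < x) (α β : ℝ) (w : ℂ) :
    ((x ^ α : ℝ) : ℂ) * ((x ^ β : ℝ) : ℂ) ^ w = exp ((α + β * w) * Real.log x) := by
  rw [ofReal_cpow_eq_exp (Real.rpow_pos_of_pos hx β), Real.log_rpow hx, ofReal_cpow hx.le,
    ofReal_cpow_eq_exp hx, ← exp_add]
  push_cast
  congr 1
  ring

section
variable {a : ℝ}

lemma hasDerivAt_sq_div_add_sq (ha : 0 < a) (r : ℝ) :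
    HasDerivAt (fun r : ℝ => r ^ 2 / (a + r ^ 2)) (2 * a * r / (a + r ^ 2) ^ 2) r := by
  refine ((hasDerivAt_pow 2 r).fun_div ((hasDerivAt_pow 2 r).const_add a)
    (by positivity)).congr_deriv ?_
  norm_num
  ring

lemma strictMonoOn_sq_div_add_sq (ha : 0 < a) :
    StrictMonoOn (fun r : ℝ => r ^ 2 / (a + r ^ 2)) (Ioi 0) := by
  intro x hx y _ hxy
  have hsq : x ^ 2 < y ^ 2 := pow_lt_pow_left₀ hxy (le_of_lt hx) two_ne_zero
  rw [div_lt_div_iff₀ (by positivity) (by positivity)]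
  nlinarith

lemma image_sq_div_add_sq_Ioi (ha : 0 < a) :
    (fun r : ℝ => r ^ 2 / (a + r ^ 2)) '' Ioi 0 = Ioo 0 1 := by
  refine Subset.antisymm ?_ fun x ⟨hx₀, hx₁⟩ => ?_
  · rintro _ ⟨r, hr : 0 < r, rfl⟩
    exact ⟨by positivity, (div_lt_one (by positivity)).mpr (by linarith)⟩
  · have hy : 0 < a * x / (1 - x) := div_pos (by positivity) (by linarith)
    refine ⟨√(a * x / (1 - x)), Real.sqrt_pos.mpr hy, ?_⟩
    have : 1 - x ≠ 0 := by linarith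
    simp only [Real.sq_sqrt hy.le]
    field_simp
    ring

lemma abs_deriv_smul_betaIntegrand_sq_div_add_sq (ha : 0 < a) (ν : ℝ) (s : ℂ) {r : ℝ}
    (hr : 0 < r) :
    |2 * a * r / (a + r ^ 2) ^ 2| •
        (((r ^ 2 / (a + r ^ 2) : ℝ) : ℂ) ^ (s / 2 - 1) *
          (1 - ((r ^ 2 / (a + r ^ 2) : ℝ) : ℂ)) ^ (ν - s / 2 - 1)) =
      2 * (a : ℂ) ^ (ν - s / 2) * ((r : ℂ) ^ (s - 1) • ((((a + r ^ 2) ^ ν)⁻¹ : ℝ) : ℂ)) := by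
  have hA : 0 < a + r ^ 2 := by positivity
  have hA' : (a : ℂ) + r ^ 2 ≠ 0 := by exact_mod_cast hA.ne'
  have hsub : (1 : ℂ) - ((r ^ 2 / (a + r ^ 2) : ℝ) : ℂ) = ((a / (a + r ^ 2) : ℝ) : ℂ) := by
    push_cast
    field_simp
    ring
  have hjac : ((2 * a * r / (a + r ^ 2) ^ 2 : ℝ) : ℂ) =
      2 * exp (Real.log a + Real.log r - Real.log (a + r ^ 2) - Real.log (a + r ^ 2)) := by
    rw [exp_sub, exp_sub, exp_add, ← ofReal_eq_exp ha, ← ofReal_eq_exp hr, ← ofReal_eq_exp hA]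
    push_cast
    field_simp
  rw [abs_of_pos (by positivity), real_smul, smul_eq_mul, ofReal_inv, hsub, hjac,
    ofReal_cpow_eq_exp (by positivity), ofReal_cpow_eq_exp (by positivity),
    ofReal_cpow_eq_exp ha, ofReal_cpow_eq_exp hr,
    ofReal_eq_exp (x := (a + r ^ 2) ^ ν) (by positivity), ← exp_neg,
    Real.log_div (by positivity) hA.ne', Real.log_div ha.ne' hA.ne', Real.log_pow,
    Real.log_rpow hA]
  simp only [mul_assoc, ← exp_add]
  congr 2
  push_cast
  ring

end

lemma integrableOn_Ioo_betaIntegrand {u v : ℂ} (hu : 0 < u.re) (hv : 0 < v.re) :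
    IntegrableOn (fun x : ℝ => (x : ℂ) ^ (u - 1) * (1 - (x : ℂ)) ^ (v - 1)) (Ioo 0 1) := by
  have h := betaIntegral_convergent hu hv
  rw [intervalIntegrable_iff_integrableOn_Ioc_of_le zero_le_one] at h
  exact h.mono_set Ioo_subset_Ioc_self

lemma setIntegral_Ioo_betaIntegrand (u v : ℂ) :
    ∫ x in Ioo (0 : ℝ) 1, (x : ℂ) ^ (u - 1) * (1 - (x : ℂ)) ^ (v - 1) = betaIntegral u v := by
  rw [betaIntegral, intervalIntegral.integral_of_le zero_le_one, integral_Ioc_eq_integral_Ioo]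

theorem hasMellin_inv_add_sq_rpow {a ν : ℝ} (ha : 0 < a) {s : ℂ} (hs₀ : 0 < s.re)
    (hs₁ : s.re < 2 * ν) :
    HasMellin (fun r : ℝ => ((((a + r ^ 2) ^ ν)⁻¹ : ℝ) : ℂ)) s
      (betaIntegral (s / 2) (ν - s / 2) / 2 * (a : ℂ) ^ (s / 2 - ν)) := by
  set ψ : ℝ → ℝ := fun r => r ^ 2 / (a + r ^ 2)
  set B : ℝ → ℂ := fun x => (x : ℂ) ^ (s / 2 - 1) * (1 - (x : ℂ)) ^ (ν - s / 2 - 1)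
  set c : ℂ := 2 * (a : ℂ) ^ (ν - s / 2)
  have hc : c ≠ 0 := mul_ne_zero two_ne_zero ((cpow_eq_zero_iff _ _).not.mpr (by simp [ha.ne']))
  have hu : 0 < (s / 2).re := by rw [div_ofNat_re]; positivity
  have hv : 0 < ((ν : ℂ) - s / 2).re := by rw [sub_re, ofReal_re, div_ofNat_re]; linarith
  have hψ' : ∀ r ∈ Ioi (0 : ℝ), HasDerivWithinAt ψ (2 * a * r / (a + r ^ 2) ^ 2) (Ioi 0) r :=
    fun r _ => (hasDerivAt_sq_div_add_sq ha r).hasDerivWithinAt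
  have hψinj : InjOn ψ (Ioi 0) := (strictMonoOn_sq_div_add_sq ha).injOn
  have hsubst : EqOn (fun r => |2 * a * r / (a + r ^ 2) ^ 2| • B (ψ r))
      (fun r => c * ((r : ℂ) ^ (s - 1) • ((((a + r ^ 2) ^ ν)⁻¹ : ℝ) : ℂ))) (Ioi 0) :=
    fun r hr => abs_deriv_smul_betaIntegrand_sq_div_add_sq ha ν s hr
  have hint : IntegrableOn (fun r => |2 * a * r / (a + r ^ 2) ^ 2| • B (ψ r)) (Ioi 0) := by
    rw [← integrableOn_image_iff_integrableOn_abs_deriv_smul measurableSet_Ioi hψ' hψinj,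
      image_sq_div_add_sq_Ioi ha]
    exact integrableOn_Ioo_betaIntegrand hu hv
  have hbeta : betaIntegral (s / 2) (ν - s / 2) =
      c * mellin (fun r : ℝ => ((((a + r ^ 2) ^ ν)⁻¹ : ℝ) : ℂ)) s := by
    rw [← setIntegral_Ioo_betaIntegrand, ← image_sq_div_add_sq_Ioi ha,
      integral_image_eq_integral_abs_deriv_smul measurableSet_Ioi hψ' hψinj,
      setIntegral_congr_fun measurableSet_Ioi hsubst, integral_const_mul, mellin]
  refine ⟨?_, ?_⟩
  · exact (integrable_const_mul_iff (IsUnit.mk0 c hc) _).mp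
      ((integrableOn_congr_fun hsubst measurableSet_Ioi).mp hint)
  · have hpow : (a : ℂ) ^ (ν - s / 2) * (a : ℂ) ^ (s / 2 - ν) = 1 := by
      rw [← cpow_add _ _ (ofReal_ne_zero.mpr ha.ne'), sub_add_sub_cancel', sub_self, cpow_zero]
    rw [hbeta]
    linear_combination -(mellin (fun r : ℝ => ((((a + r ^ 2) ^ ν)⁻¹ : ℝ) : ℂ)) s) * hpow

lemma integral_norm_cpow_smul_ofReal_eq_norm_mellin {g : ℝ → ℝ}
    (hg : ∀ t ∈ Ioi (0 : ℝ), 0 ≤ g t) (s : ℂ) :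
    ∫ t in Ioi (0 : ℝ), ‖(t : ℂ) ^ (s - 1) • (g t : ℂ)‖ = ‖mellin (fun t => (g t : ℂ)) s.re‖ := by
  have hnorm : EqOn (fun t : ℝ => ‖(t : ℂ) ^ (s - 1) • (g t : ℂ)‖)
      (fun t => t ^ (s.re - 1) * g t) (Ioi 0) := fun t (ht : 0 < t) => by
    dsimp only
    rw [norm_smul, norm_cpow_eq_rpow_re_of_pos ht, norm_real, Real.norm_of_nonneg (hg t ht),
      sub_re, one_re]
  have hmellin : mellin (fun t => (g t : ℂ)) s.re =
      ((∫ t in Ioi (0 : ℝ), t ^ (s.re - 1) * g t : ℝ) : ℂ) := by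
    rw [mellin, ← integral_complex_ofReal]
    refine setIntegral_congr_fun measurableSet_Ioi fun t (ht : 0 < t) => ?_
    rw [smul_eq_mul, ofReal_mul, ofReal_cpow ht.le, ofReal_sub, ofReal_one]
  rw [setIntegral_congr_fun measurableSet_Ioi hnorm, hmellin, norm_real,
    Real.norm_of_nonneg (setIntegral_nonneg measurableSet_Ioi fun t ht =>
      mul_nonneg (Real.rpow_nonneg (le_of_lt ht) _) (hg t ht))]

theorem hasSum_mellin_tsum {ι : Type*} [Countable ι] {f : ι → ℝ → ℂ} {s : ℂ} {m : ι → ℂ}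
    (hf : ∀ i, HasMellin (f i) s (m i))
    (hsum : Summable fun i => ∫ t in Ioi (0 : ℝ), ‖(t : ℂ) ^ (s - 1) • f i t‖) :
    HasSum m (mellin (fun t => ∑' i, f i t) s) := by
  have h := hasSum_integral_of_summable_integral_norm (fun i => (hf i).1) hsum
  simp only [smul_eq_mul, tsum_mul_left] at h
  have hm : m = fun i => ∫ t in Ioi (0 : ℝ), (t : ℂ) ^ (s - 1) * f i t :=
    funext fun i => by simp only [← (hf i).2, mellin, smul_eq_mul]
  simpa only [hm, mellin, smul_eq_mul] using h

theorem hasSum_mellin_tsum_div_add_sq_rpow {ν : ℝ} {c l : ℕ → ℝ} (hc : ∀ n, 0 ≤ c n)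
    (hl : ∀ n, 0 < l n) {s : ℂ} (hs₀ : 0 < s.re) (hs₁ : s.re < 2 * ν)
    (hsum : Summable fun n => c n * l n ^ (s.re / 2 - ν)) :
    HasSum (fun n => betaIntegral (s / 2) (ν - s / 2) / 2 * (c n * (l n : ℂ) ^ (s / 2 - ν)))
      (mellin (fun r => ((∑' n, c n / (l n + r ^ 2) ^ ν : ℝ) : ℂ)) s) := by
  have hterm (n : ℕ) {w : ℂ} (hw₀ : 0 < w.re) (hw₁ : w.re < 2 * ν) :
      HasMellin (fun r : ℝ => ((c n / (l n + r ^ 2) ^ ν : ℝ) : ℂ)) w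
        (betaIntegral (w / 2) (ν - w / 2) / 2 * (c n * (l n : ℂ) ^ (w / 2 - ν))) := by
    have h := hasMellin_inv_add_sq_rpow (hl n) hw₀ hw₁
    convert hasMellin_const_smul h.1 (c n : ℂ) using 1
    · ext r
      rw [smul_eq_mul, ← ofReal_mul, div_eq_mul_inv]
    · rw [h.2, smul_eq_mul]
      ring
  simp_rw [ofReal_tsum]
  refine hasSum_mellin_tsum (fun n => hterm n hs₀ hs₁) ?_
  have hre := fun n => (hterm n (w := s.re) (by simpa using hs₀) (by simpa using hs₁)).2
  refine (hsum.mul_left ‖betaIntegral (s.re / 2) (ν - s.re / 2) / 2‖).congr fun n => ?_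
  have hterm_nonneg : ∀ r ∈ Ioi (0 : ℝ), 0 ≤ c n / (l n + r ^ 2) ^ ν :=
    fun r _ => div_nonneg (hc n) (Real.rpow_nonneg (by linarith [hl n, sq_nonneg r]) ν)
  rw [integral_norm_cpow_smul_ofReal_eq_norm_mellin hterm_nonneg, hre, norm_mul, norm_mul,
    norm_real, Real.norm_of_nonneg (hc n), norm_cpow_eq_rpow_re_of_pos (hl n), sub_re,
    div_ofNat_re, ofReal_re, ofReal_re]

lemma summable_factorial_rpow {c : ℝ} (hc : c < 0) : Summable fun n : ℕ => (n ! : ℝ) ^ c := by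
  refine summable_of_ratio_test_tendsto_lt_one zero_lt_one
    (Eventually.of_forall fun n => by positivity) ?_
  have hratio (n : ℕ) : ‖((n + 1)! : ℝ) ^ c‖ / ‖(n ! : ℝ) ^ c‖ = ((n + 1 : ℕ) : ℝ) ^ c := by
    have hn : (0 : ℝ) < n ! := by positivity
    rw [Real.norm_of_nonneg (by positivity), Real.norm_of_nonneg (by positivity),
      Nat.factorial_succ, Nat.cast_mul, Real.mul_rpow (by positivity) hn.le,
      mul_div_cancel_right₀ _ (Real.rpow_pos_of_pos hn c).ne']
  simp_rw [hratio]
  exact ((neg_neg c ▸ tendsto_rpow_neg_atTop (neg_pos.mpr hc)).comp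
    tendsto_natCast_atTop_atTop).comp (tendsto_add_atTop_nat 1)

theorem mathieu_factorial_mellin_transform_general
    (α β μ : ℝ) (hα : 0 ≤ α) (hβ : 0 < β)
    (s : ℂ) (hs₀ : 0 < s.re) (hs₁ : s.re < 2 * (μ + 1 - α / β)) :
    ∫ r in Set.Ioi (0 : ℝ),
        ((∑' n : ℕ, ((n.factorial : ℝ)) ^ α /
          (((n.factorial : ℝ)) ^ β + r ^ 2) ^ (μ + 1) : ℝ) : ℂ)
        * (r : ℂ) ^ (s - 1)
      = Complex.Gamma ((μ : ℂ) + 1 - s / 2) * Complex.Gamma (s / 2)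
        / (2 * Complex.Gamma ((μ : ℂ) + 1))
        * ∑' n : ℕ,
            Complex.exp (-((β : ℂ) * (((2 * (μ + 1 - α / β) : ℝ) : ℂ) - s) / 2) *
              (Real.log (n.factorial : ℝ) : ℂ)) := by
  have hfac (n : ℕ) : (0 : ℝ) < n ! := by positivity
  have hs₁' : s.re < 2 * (μ + 1) := by linarith [div_nonneg hα hβ.le]
  have hexp : α + β * (s.re / 2 - (μ + 1)) < 0 := by
    have := mul_lt_mul_of_pos_left hs₁ hβ
    field_simp at this
    linarith
  have hsum : Summable fun n : ℕ => (n ! : ℝ) ^ α * ((n ! : ℝ) ^ β) ^ (s.re / 2 - (μ + 1)) :=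
    (summable_factorial_rpow hexp).congr fun n => by
      rw [← Real.rpow_mul (hfac n).le, ← Real.rpow_add (hfac n)]
  have h := hasSum_mellin_tsum_div_add_sq_rpow (fun n => Real.rpow_nonneg (hfac n).le α)
    (fun n => Real.rpow_pos_of_pos (hfac n) β) hs₀ hs₁' hsum
  have hB : betaIntegral (s / 2) (((μ + 1 : ℝ) : ℂ) - s / 2) / 2 =
      Gamma ((μ : ℂ) + 1 - s / 2) * Gamma (s / 2) / (2 * Gamma ((μ : ℂ) + 1)) := by
    rw [betaIntegral_eq_Gamma_mul_div _ _ (by rw [div_ofNat_re]; positivity)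
      (by rw [sub_re, ofReal_re, div_ofNat_re]; linarith), add_sub_cancel]
    push_cast
    ring
  have hterm (n : ℕ) : exp (-((β : ℂ) * (((2 * (μ + 1 - α / β) : ℝ) : ℂ) - s) / 2) *
      (Real.log (n ! : ℝ) : ℂ)) =
      ((n ! : ℝ) ^ α : ℝ) * (((n ! : ℝ) ^ β : ℝ) : ℂ) ^ (s / 2 - ((μ + 1 : ℝ) : ℂ)) := by
    rw [ofReal_rpow_mul_ofReal_rpow_cpow (hfac n)]
    congr 1
    push_cast
    field_simp [ofReal_ne_zero.mpr hβ.ne']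
    ring
  simp_rw [hterm]
  rw [← hB, ← tsum_mul_left, h.tsum_eq, mellin]
  exact setIntegral_congr_fun measurableSet_Ioi fun r _ => mul_comm _ _

/-- Equation (3.4): the Mellin transform of the factorial Mathieu-type series
`S^!_{α,β,μ}` on the strip `0 < Re(s) < s̃`, `s̃ = 2(μ+1−α/β)`, equals
`Γ(μ+1−s/2) Γ(s/2) / (2 Γ(μ+1)) · η(β(s̃−s)/2)`, where
`η(z) = ∑_{n=0}^∞ (n!)^{−z}`. -/
theorem mathieu_factorial_mellin_transform
    (α β μ : ℝ) (hα : 0 ≤ α) (hβ : 0 < β) (hμ : 0 ≤ μ)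
    (hconv : α - β * (μ + 1) < 0)
    (s : ℂ) (hs₀ : 0 < s.re) (hs₁ : s.re < 2 * (μ + 1 - α / β)) :
    ∫ r in Set.Ioi (0 : ℝ),
        ((∑' n : ℕ, ((n.factorial : ℝ)) ^ α /
          (((n.factorial : ℝ)) ^ β + r ^ 2) ^ (μ + 1) : ℝ) : ℂ)
        * (r : ℂ) ^ (s - 1)
      = Complex.Gamma ((μ : ℂ) + 1 - s / 2) * Complex.Gamma (s / 2)
        / (2 * Complex.Gamma ((μ : ℂ) + 1))
        * ∑' n : ℕ,
            Complex.exp (-((β : ℂ) * (((2 * (μ + 1 - α / β) : ℝ) : ℂ) - s) / 2) *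
              (Real.log (n.factorial : ℝ) : ℂ)) :=
  mathieu_factorial_mellin_transform_general α β μ hα hβ s hs₀ hs₁
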